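/- arXiv:math/0303328 — 7 statements merged into one kernel-verified Lean document; each statement's English description precedes it below -/
import Mathlib

section
/- Let G be a group generated by elements κ and α acting on a partially ordered set P by order-preserving bijections, together with elements β, μ of G satisfying α²βα²β²α⁻¹β² = 1, κ^n = α⁻²βα⁻¹ for some integer n, and μ = α⁻¹β⁻². If x ∈ P satisfies xκ = x, xμ = x, and x, xα are comparable, then xα = x. -/
/-- Lemma "poset", first case: `G = ⟨κ, α⟩` acts on a poset `P` on the right by
order-preserving bijections, with `β, μ` satisfying `α²βα²β²α⁻¹β² = 1`,
`κⁿ = α⁻²βα⁻¹` for some integer `n`, and `μ = α⁻¹β⁻²`.  If `x ∈ P` satisfies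
`xκ = x`, `xμ = x`, and `x, xα` are comparable, then `xα = x`. -/
theorem poset_lemma_fixed_by_kappa {P : Type*} [PartialOrder P]
    (κ α β μ : P ≃o P)
    -- the relation α²βα²β²α⁻¹β² = 1, read as a right action (apply left to right)
    (hrel : ∀ x : P, β (β (α.symm (β (β (α (α (β (α (α x))))))))) = x)
    -- μ = α⁻¹β⁻²
    (hμ : ∀ x : P, μ x = β.symm (β.symm (α.symm x)))
    -- κⁿ = α⁻²βα⁻¹ for some integer n
    (hκ : ∃ n : ℤ, ∀ x : P, (κ ^ n) x = α.symm (β (α.symm (α.symm x))))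
    (x : P) (hxκ : κ x = x) (hxμ : μ x = x)
    (hcomp : x ≤ α x ∨ α x ≤ x) :
    α x = x := by
  obtain ⟨n, hn⟩ := hκ
  -- κ fixes x, hence every integer power of κ fixes x
  have hsymm : κ.symm x = x := by
    conv_lhs => rw [← hxκ]
    exact κ.symm_apply_apply x
  have hpow : ∀ m : ℕ, (κ ^ m) x = x := by
    intro m
    induction m with
    | zero => rfl
    | succ k ih =>
      have : (κ ^ (k + 1)) x = (κ ^ k) (κ x) := by
        rw [pow_succ]; rfl
      rw [this, hxκ, ih]
  have hzpow : (κ ^ n) x = x := by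
    rcases n with m | m
    · exact hpow m
    · have h1 : (κ ^ (m + 1 : ℕ)) ((κ ^ (Int.negSucc m)) x) = x := by
        have : κ ^ (m + 1 : ℕ) * κ ^ (Int.negSucc m) = 1 := by
          rw [zpow_negSucc]
          exact mul_inv_cancel _
        calc (κ ^ (m + 1 : ℕ)) ((κ ^ (Int.negSucc m)) x)
            = (κ ^ (m + 1 : ℕ) * κ ^ (Int.negSucc m)) x := rfl
          _ = x := by rw [this]; rfl
      have h2 : (κ ^ (m + 1 : ℕ)) x = x := hpow (m + 1)
      have := h1.trans h2.symm
      exact (κ ^ (m + 1 : ℕ)).injective this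
  -- key equalities at x
  have E2 : β (α.symm (α.symm x)) = α x := by
    have h := hn x
    rw [hzpow] at h
    have := congrArg α h.symm
    rwa [α.apply_symm_apply] at this
  have E1 : β (β x) = α.symm x := by
    have h := hμ x
    rw [hxμ] at h
    calc β (β x) = β (β (β.symm (β.symm (α.symm x)))) := by rw [← h]
      _ = α.symm x := by rw [β.apply_symm_apply, β.apply_symm_apply]
  rcases hcomp with hc | hc
  · -- x ≤ α x
    have h1 : α.symm x ≤ x := by
      have := α.symm.monotone hc
      rwa [α.symm_apply_apply] at this
    have hb2 : β (β x) ≤ x := E1 ▸ h1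
    have ha2 : α.symm (α.symm x) ≤ β (β x) := by
      rw [E1]; exact α.symm.monotone h1
    have key : α x ≤ β (β (β x)) := by
      rw [← E2]; exact β.monotone ha2
    have hb3 : β (β (β x)) ≤ β x := β.monotone hb2
    have hxb : x ≤ β x := le_trans hc (le_trans key hb3)
    have hbb : β x ≤ β (β x) := β.monotone hxb
    have heq : β (β x) = x := le_antisymm hb2 (le_trans hxb hbb)
    have : α.symm x = x := by rw [← E1, heq]
    have h2 := congrArg α this
    rw [α.apply_symm_apply] at h2
    exact h2.symm
  · -- α x ≤ x
    have h1 : x ≤ α.symm x := by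
      have := α.symm.monotone hc
      rwa [α.symm_apply_apply] at this
    have hb2 : x ≤ β (β x) := E1 ▸ h1
    have ha2 : β (β x) ≤ α.symm (α.symm x) := by
      rw [E1]; exact α.symm.monotone h1
    have key : β (β (β x)) ≤ α x := by
      rw [← E2]; exact β.monotone ha2
    have hb3 : β x ≤ β (β (β x)) := β.monotone hb2
    have hxb : β x ≤ x := le_trans (le_trans hb3 key) hc
    have hbb : β (β x) ≤ β x := β.monotone hxb
    have heq : β (β x) = x := le_antisymm (le_trans hbb hxb) hb2
    have : α.symm x = x := by rw [← E1, heq]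
    have h2 := congrArg α this
    rw [α.apply_symm_apply] at h2
    exact h2.symm
end

section
/- Let G be a group generated by κ and α acting on a poset P by order-preserving bijections, with elements β, μ satisfying α²βα²β²α⁻¹β² = 1, μ = α⁻¹β⁻², μ = κ^q and κ^{p−18q} = α⁻²βα⁻¹ where q > 0 and p − 18q > 0. If x ∈ P satisfies xα = x and x < xκ, then a contradiction follows; hence any point fixed by α and comparable to its κ-image is fixed by κ. -/
/-!
Since `α` fixes `x` and `κ` pushes `x` up, `μ = κ^q` pushes `x` up, so `β² = (μα)⁻¹` pushes `x`
down. Using the defining relation, `κ^(p-17q) = μ κ^(p-18q)` acts on `x` as the word `α⁻¹β²α²β²`,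
which, built from `β²` (strictly down at `x`) and powers of `α` (fixing `x`), moves `x` strictly
down. But `κ^(p-17q)` is a positive power of `κ`, so it moves `x` strictly up.
-/

namespace OrderIso

variable {P : Type*}

theorem lt_zpow_apply_of_lt [Preorder P] {f : P ≃o P} {x : P} (hx : x < f x) {n : ℤ}
    (hn : 0 < n) : x < (f ^ n) x := by
  induction n, hn using Int.leInduction with
  | base => simpa using hx
  | succ m _ ih =>
    rw [zpow_add_one]
    exact ih.trans ((f ^ m).strictMono hx)

theorem symm_apply_eq_self [LE P] {f : P ≃o P} {x : P} (hx : f x = x) : f.symm x = x :=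
  f.symm_apply_eq.2 hx.symm

end OrderIso

open OrderIso

theorem symm_apply_symm_apply_of_relation {P : Type*} [LE P] {α β : P ≃o P}
    (hrel : ∀ x : P, β (β (α.symm (β (β (α (α (β (α (α x))))))))) = x) (z : P) :
    β.symm (β.symm (α.symm (α.symm (β z)))) = α.symm (β (β (α (α (β (β z)))))) := by
  rw [← hrel (α.symm (α.symm (β z)))]
  simp

/-- Lemma "poset", second case: with `q > 0` and `p − 18q > 0`, if `xα = x`
and `x < xκ` then a contradiction follows. -/
theorem poset_lemma_fixed_by_alpha {P : Type*} [PartialOrder P]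
    (κ α β μ : P ≃o P) (p q : ℤ) (hq : 0 < q) (hpq : 0 < p - 18 * q)
    -- the relation α²βα²β²α⁻¹β² = 1, read as a right action
    (hrel : ∀ x : P, β (β (α.symm (β (β (α (α (β (α (α x))))))))) = x)
    -- μ = α⁻¹β⁻²
    (hμ : ∀ x : P, μ x = β.symm (β.symm (α.symm x)))
    -- μ = κ^q
    (hμκ : ∀ x : P, μ x = (κ ^ q) x)
    -- κ^{p-18q} = α⁻²βα⁻¹
    (hκ : ∀ x : P, (κ ^ (p - 18 * q)) x = α.symm (β (α.symm (α.symm x))))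
    (x : P) (hxα : α x = x) (hxκ : x < κ x) :
    False := by
  have hαx : α.symm x = x := symm_apply_eq_self hxα
  have hβx : β (β x) < x := by
    have hup : x < β.symm (β.symm x) := by
      have hμx := hμ x
      rw [hμκ, hαx] at hμx
      exact hμx ▸ lt_zpow_apply_of_lt hxκ hq
    simpa using β.strictMono (β.strictMono hup)
  have hword : (κ ^ (q + (p - 18 * q))) x = α.symm (β (β (α (α (β (β x)))))) := by
    rw [zpow_add]
    change (κ ^ q) ((κ ^ (p - 18 * q)) x) = _
    rw [hκ, hαx, hαx, ← hμκ, hμ, symm_apply_symm_apply_of_relation hrel]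
  have hdown : α.symm (β (β (α (α (β (β x)))))) < x := by
    have h₁ : α (α (β (β x))) < x := by simpa [hxα] using α.strictMono (α.strictMono hβx)
    have h₂ : β (β (α (α (β (β x))))) < x := (β.strictMono (β.strictMono h₁)).trans hβx
    simpa [hαx] using α.symm.strictMono h₂
  exact (lt_zpow_apply_of_lt hxκ (by omega)).not_gt (hword ▸ hdown)
end

section
/- Let α, β, κ, μ be orientation-preserving homeomorphisms of ℝ satisfying α²βα²β²α⁻¹β² = id and μ = α⁻¹β⁻² = κ^q with q > 0. If xκ > x for all x ∈ ℝ, then xβ < x for all x ∈ ℝ. -/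
/-! From `x < xκ` we get `x < xμ = xα⁻¹β⁻²`, i.e. `xβ² < xα⁻¹` for every `x`. Feeding this
twice into the relation, evaluated at the point `yα⁻²`, gives `yα⁻¹ < yβ`; hence
`xβ² < xα⁻¹ < xβ`, and so `xβ < x`. -/

namespace OrderIso

variable {X : Type*} [Preorder X]

theorem lt_pow_apply {f : X ≃o X} (hf : ∀ x, x < f x) {n : ℕ} (hn : 0 < n) (x : X) :
    x < (f ^ n) x := by
  induction n, hn using Nat.le_induction generalizing x with
  | base => simpa using hf x
  | succ n _ ih =>
    rw [pow_succ, RelIso.mul_apply]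
    exact (hf x).trans (ih (f x))

theorem lt_zpow_apply {f : X ≃o X} (hf : ∀ x, x < f x) {n : ℤ} (hn : 0 < n) (x : X) :
    x < (f ^ n) x := by
  lift n to ℕ using hn.le
  rw [zpow_natCast]
  exact lt_pow_apply hf (by omega) x

theorem symm_apply_lt_apply_of_relation {a b : X ≃o X}
    (hrel : ∀ x, b (b (a.symm (b (b (a (a (b (a (a x))))))))) = x)
    (hb : ∀ x, b (b x) < a.symm x) (y : X) :
    a.symm y < b y := by
  set z := a (a (b y))
  have hrel_y : b (b (a.symm (b (b z)))) = a.symm (a.symm y) := by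
    simpa [z] using hrel (a.symm (a.symm y))
  have : a.symm (a.symm y) < a.symm (b y) :=
    calc a.symm (a.symm y) = b (b (a.symm (b (b z)))) := hrel_y.symm
      _ < a.symm (a.symm (b (b z))) := hb _
      _ < a.symm (a.symm (a.symm z)) := a.symm.strictMono (a.symm.strictMono (hb z))
      _ = a.symm (b y) := by simp [z]
  exact a.symm.lt_iff_lt.mp this

end OrderIso

/-- Lemma `lem:beta`: for orientation-preserving homeomorphisms of ℝ (acting on
the right) satisfying `α²βα²β²α⁻¹β² = id` and `μ = α⁻¹β⁻² = κ^q` with `q > 0`,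
if `xκ > x` for all `x` then `xβ < x` for all `x`. -/
theorem beta_moves_down (α β κ μ : ℝ ≃o ℝ) (q : ℤ) (hq : 0 < q)
    -- the relation α²βα²β²α⁻¹β² = 1, read as a right action
    (hrel : ∀ x : ℝ, β (β (α.symm (β (β (α (α (β (α (α x))))))))) = x)
    -- μ = α⁻¹β⁻²
    (hμ : ∀ x : ℝ, μ x = β.symm (β.symm (α.symm x)))
    -- μ = κ^q
    (hμκ : ∀ x : ℝ, μ x = (κ ^ q) x)
    (hκ : ∀ x : ℝ, x < κ x) :
    ∀ x : ℝ, β x < x := by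
  have hμ_up : ∀ x, x < μ x := fun x => hμκ x ▸ OrderIso.lt_zpow_apply hκ hq x
  have hββ : ∀ x, β (β x) < α.symm x := fun x => by
    simpa only [hμ, OrderIso.lt_symm_apply] using hμ_up x
  intro x
  exact β.lt_iff_lt.mp ((hββ x).trans (OrderIso.symm_apply_lt_apply_of_relation hrel hββ x))
end

section
/- Let α, β, κ be orientation-preserving homeomorphisms of ℝ with α²βα²β²α⁻¹β² = id, μ := α⁻¹β⁻² = κ^q, κ^{p−18q} = α⁻²βα⁻¹, q > 0, and suppose xκ > x and xα > x for all x ∈ ℝ. Then xα > xμ² for all x ∈ ℝ. -/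
/-!
Since `μ = κ ^ q` with `q > 0`, `μ = β⁻²α⁻¹` moves every point up; equivalently its inverse
`αβ²` and the conjugates `β²α` and `βαβ` move every point down. Conjugating `x < μ x` by `β⁻¹α`
and using the relation gives `μ x < β (α x)`, hence
`μ (μ x) < β (α (μ x)) < β (α (β (α x))) < α x`.
-/

theorem OrderIso.self_lt_pow_apply {X : Type*} [Preorder X] {f : X ≃o X} (hf : ∀ x, x < f x)
    {n : ℕ} (hn : n ≠ 0) (x : X) : x < (f ^ n) x := by
  induction n, Nat.one_le_iff_ne_zero.mpr hn using Nat.le_induction generalizing x with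
  | base => simpa using hf x
  | succ n hn ih => exact (hf x).trans (ih (by omega) (f x))

theorem OrderIso.self_lt_zpow_apply {X : Type*} [Preorder X] {f : X ≃o X} (hf : ∀ x, x < f x)
    {n : ℤ} (hn : 0 < n) (x : X) : x < (f ^ n) x := by
  lift n to ℕ using hn.le
  exact_mod_cast OrderIso.self_lt_pow_apply hf (by omega) x

section

variable {X : Type*} [Preorder X] {α β μ : X ≃o X}

theorem βαβ_lt_self (hμ : ∀ x, μ x = β.symm (β.symm (α.symm x))) (hμpos : ∀ x, x < μ x)
    (x : X) : β (α (β x)) < x := by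
  simpa [hμ] using hμpos (α (β (β (α (β x)))))

theorem μ_lt_βα (hrel : ∀ x, β (β (α.symm (β (β (α (α (β (α (α x))))))))) = x)
    (hμ : ∀ x, μ x = β.symm (β.symm (α.symm x))) (hμpos : ∀ x, x < μ x) (x : X) :
    μ x < β (α x) := by
  obtain ⟨v, rfl⟩ := (α.trans (α.trans (β.trans α))).surjective x
  calc μ (α (β (α (α v)))) = β.symm (α (α v)) := by simp [hμ]
    _ < β.symm (α (μ (α v))) := by simpa using hμpos (α v)
    _ = β (α (α (β (α (α v))))) := by
      rw [β.symm_apply_eq]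
      conv_lhs => rw [← hrel v]
      simp [hμ]

end

theorem alpha_dominates_mu_sq_general (α β κ μ : ℝ ≃o ℝ) (q : ℤ) (hq : 0 < q)
    -- the relation α²βα²β²α⁻¹β² = 1, read as a right action
    (hrel : ∀ x : ℝ, β (β (α.symm (β (β (α (α (β (α (α x))))))))) = x)
    -- μ = α⁻¹β⁻²
    (hμ : ∀ x : ℝ, μ x = β.symm (β.symm (α.symm x)))
    -- μ = κ^q
    (hμκ : ∀ x : ℝ, μ x = (κ ^ q) x)
    (hκpos : ∀ x : ℝ, x < κ x) :
    ∀ x : ℝ, (μ ^ 2) x < α x := by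
  have hμpos : ∀ x, x < μ x := fun x => hμκ x ▸ OrderIso.self_lt_zpow_apply hκpos hq x
  intro x
  calc (μ ^ 2) x = μ (μ x) := by rw [pow_two]; rfl
    _ < β (α (μ x)) := μ_lt_βα hrel hμ hμpos (μ x)
    _ < β (α (β (α x))) := β.strictMono (α.strictMono (μ_lt_βα hrel hμ hμpos x))
    _ < α x := βαβ_lt_self hμ hμpos (α x)

/-- Step (7) in Proposition "real": if `xκ > x` and `xα > x` for all `x ∈ ℝ`,
then `xα > xμ²` for all `x ∈ ℝ`. -/
theorem alpha_dominates_mu_sq (α β κ μ : ℝ ≃o ℝ) (p q : ℤ) (hq : 0 < q)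
    -- the relation α²βα²β²α⁻¹β² = 1, read as a right action
    (hrel : ∀ x : ℝ, β (β (α.symm (β (β (α (α (β (α (α x))))))))) = x)
    -- μ = α⁻¹β⁻²
    (hμ : ∀ x : ℝ, μ x = β.symm (β.symm (α.symm x)))
    -- μ = κ^q
    (hμκ : ∀ x : ℝ, μ x = (κ ^ q) x)
    -- κ^{p-18q} = α⁻²βα⁻¹
    (hκ : ∀ x : ℝ, (κ ^ (p - 18 * q)) x = α.symm (β (α.symm (α.symm x))))
    (hκpos : ∀ x : ℝ, x < κ x) (hαpos : ∀ x : ℝ, x < α x) :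
    ∀ x : ℝ, (μ ^ 2) x < α x :=
  alpha_dominates_mu_sq_general α β κ μ q hq hrel hμ hμκ hκpos
end

section
/- Let α, β, κ be orientation-preserving homeomorphisms of ℝ with α²βα²β²α⁻¹β² = id, μ := α⁻¹β⁻² = κ^q, q > 0, such that xκ > x for all x ∈ ℝ. Then xβ⁻² > xμ³ for all x ∈ ℝ. -/
/-!
Words are read as compositions, as `*` is in `ℝ ≃o ℝ`. Since `κ` moves every point up and
`μ = κ^q` with `q > 0`, so does `μ`. The relation, rewritten as `α²βα² = β⁻²αβ⁻²`, together with
`β⁻² = μα`, expresses `α` as the word `μα²μα⁻³μα²μα⁻¹μ`. Deleting its three inner letters `μ`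
leaves `μ²`, and each deletion moves every point strictly down, so `μ²(x) < α(x)`; applying `μ`
gives `μ³(x) < μ(α(x)) = β⁻²(x)`.
-/

namespace OrderIso

variable {X : Type*} [Preorder X]

theorem mul_apply_lt_mul_mul_apply {p : X ≃o X} (hp : ∀ x, x < p x) (u v : X ≃o X) (x : X) :
    (u * v) x < (u * p * v) x :=
  u.strictMono (hp (v x))

theorem sq_apply_lt_of_eq_word {a m : X ≃o X} (hm : ∀ x, x < m x)
    (ha : a = m * a * a * m * a⁻¹ * a⁻¹ * a⁻¹ * m * a * a * m * a⁻¹ * m) (x : X) :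
    (m ^ 2) x < a x := by
  calc (m ^ 2) x
      = (m * a * a * (a⁻¹ * a⁻¹ * a⁻¹ * a * a * a⁻¹ * m)) x :=
        DFunLike.congr_fun (by rw [sq]; group) x
    _ < (m * a * a * m * (a⁻¹ * a⁻¹ * a⁻¹ * a * a * a⁻¹ * m)) x :=
        mul_apply_lt_mul_mul_apply hm _ _ x
    _ = (m * a * a * m * a⁻¹ * a⁻¹ * a⁻¹ * (a * a * a⁻¹ * m)) x := DFunLike.congr_fun (by group) x
    _ < (m * a * a * m * a⁻¹ * a⁻¹ * a⁻¹ * m * (a * a * a⁻¹ * m)) x :=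
        mul_apply_lt_mul_mul_apply hm _ _ x
    _ = (m * a * a * m * a⁻¹ * a⁻¹ * a⁻¹ * m * a * a * (a⁻¹ * m)) x :=
        DFunLike.congr_fun (by group) x
    _ < (m * a * a * m * a⁻¹ * a⁻¹ * a⁻¹ * m * a * a * m * (a⁻¹ * m)) x :=
        mul_apply_lt_mul_mul_apply hm _ _ x
    _ = a x := DFunLike.congr_fun ((mul_assoc _ _ _).symm.trans ha.symm) x

end OrderIso

theorem eq_word_of_relation {G : Type*} [Group G] {a b m : G}
    (hrel : b * b * a⁻¹ * b * b * a * a * b * a * a = 1) (hm : m = b⁻¹ * b⁻¹ * a⁻¹) :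
    a = m * a * a * m * a⁻¹ * a⁻¹ * a⁻¹ * m * a * a * m * a⁻¹ * m := by
  have hrel' : a * a * b * a * a = b⁻¹ * b⁻¹ * a * b⁻¹ * b⁻¹ := by
    rw [eq_inv_of_mul_eq_one_right (a := b * b * a⁻¹ * b * b) (b := a * a * b * a * a)
      (by rw [← hrel]; group)]
    group
  calc a = (a * a * b * a * a) * (a⁻¹ * a⁻¹ * a⁻¹ * a⁻¹) * (a * a * b * a * a)
          * (a⁻¹ * a⁻¹ * b⁻¹ * b⁻¹ * a⁻¹) := by group
    _ = m * a * a * m * a⁻¹ * a⁻¹ * a⁻¹ * m * a * a * m * a⁻¹ * m := by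
        rw [hrel', hm]; group

/-- Step (8) in Proposition "real": if `xκ > x` for all `x ∈ ℝ`, then
`xβ⁻² > xμ³` for all `x ∈ ℝ`. -/
theorem beta_inv_sq_dominates_mu_cubed (α β κ μ : ℝ ≃o ℝ) (q : ℤ) (hq : 0 < q)
    -- the relation α²βα²β²α⁻¹β² = 1, read as a right action
    (hrel : ∀ x : ℝ, β (β (α.symm (β (β (α (α (β (α (α x))))))))) = x)
    -- μ = α⁻¹β⁻²
    (hμ : ∀ x : ℝ, μ x = β.symm (β.symm (α.symm x)))
    -- μ = κ^q
    (hμκ : ∀ x : ℝ, μ x = (κ ^ q) x)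
    (hκpos : ∀ x : ℝ, x < κ x) :
    ∀ x : ℝ, (μ ^ 3) x < β.symm (β.symm x) := by
  have hμpos : ∀ x, x < μ x := by
    lift q to ℕ using hq.le
    intro x
    rw [hμκ, zpow_natCast]
    exact OrderIso.lt_pow_apply hκpos (by exact_mod_cast hq) x
  have hword := eq_word_of_relation (a := α) (b := β) (m := μ)
    (by ext x; exact hrel x) (by ext x; exact hμ x)
  intro x
  have hβ : β.symm (β.symm x) = μ (α x) := by simp [hμ]
  rw [hβ, pow_succ', RelIso.mul_apply]
  exact μ.strictMono (OrderIso.sq_apply_lt_of_eq_word hμpos hword x)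
end

section
/- Let α, β, κ be orientation-preserving homeomorphisms of ℝ with α²βα²β²α⁻¹β² = id, μ := α⁻¹β⁻² = κ^q, κ^{p−18q} = α⁻²βα⁻¹, q > 0, and suppose xκ > x for all x ∈ ℝ. Then xκ^{18q−p} > xκ^{8q} for all x ∈ ℝ, hence 18q − p > 8q, i.e. p/q < 10. -/
/-!
Compose maps as functions, compare them pointwise, and write `a = α`, `m = μ`,
`t = κ^{p-18q}`, `U = m a² m`. The relation becomes `U a⁻³ U = a m⁻¹ a`, and the definitions of
`μ` and `t` give `m⁻¹ = a² t a³ t a²`. Since `m > id`, the first identity yields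
`m a m < a m⁻¹ a` and then, comparing at each point, `m² < a`. If `p ≥ 10q` then
`t ≥ κ^{-8q} = m⁻⁸`, so the second identity bounds `a³ ≤ m⁸ a⁻² m⁻¹ a⁻² m⁸`. With `m⁴ < a²`
this gives `a³ < m⁷`, which fed back into the relation improves the lower bound to `m⁵ < a²`;
then `m⁷ < a³ < m⁵`, a contradiction.
-/

section Group

variable {G : Type*} [Group G] {a b m t : G}

theorem relation_of_eq_inv_mul_inv (hrel : b ^ 2 * a⁻¹ * b ^ 2 * a ^ 2 * b * a ^ 2 = 1)
    (hm : m = (b ^ 2)⁻¹ * a⁻¹) :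
    m * a ^ 2 * m * (a ^ 3)⁻¹ * (m * a ^ 2 * m) = a * m⁻¹ * a := by
  have hV : a ^ 2 * b * a ^ 2 = (b ^ 2)⁻¹ * a * (b ^ 2)⁻¹ :=
    calc a ^ 2 * b * a ^ 2
        = (b ^ 2 * a⁻¹ * b ^ 2)⁻¹ * (b ^ 2 * a⁻¹ * b ^ 2 * a ^ 2 * b * a ^ 2) := by group
      _ = (b ^ 2)⁻¹ * a * (b ^ 2)⁻¹ := by rw [hrel]; group
  subst hm
  calc _ = (b ^ 2)⁻¹ * a * (b ^ 2)⁻¹ * (a ^ 4)⁻¹ * ((b ^ 2)⁻¹ * a * (b ^ 2)⁻¹) * a⁻¹ := by group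
    _ = a ^ 2 * b * a ^ 2 * (a ^ 4)⁻¹ * (a ^ 2 * b * a ^ 2) * a⁻¹ := by rw [hV]
    _ = _ := by simp [pow_succ, mul_assoc]

theorem inv_eq_of_eq_inv_mul_inv (hm : m = (b ^ 2)⁻¹ * a⁻¹) (ht : t = a⁻¹ * b * (a ^ 2)⁻¹) :
    m⁻¹ = a ^ 2 * t * a ^ 3 * t * a ^ 2 := by
  subst hm ht
  simp [pow_succ, mul_assoc]

end Group

namespace OrderIso

variable {X : Type*}

def PointwiseLT [Preorder X] (f g : X ≃o X) : Prop := ∀ x, f x < g x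

def PointwiseLE [Preorder X] (f g : X ≃o X) : Prop := ∀ x, f x ≤ g x

local infix:50 " ≺ " => PointwiseLT
local infix:50 " ≼ " => PointwiseLE

section Preorder

variable [Preorder X] {f g h f' g' : X ≃o X}

theorem PointwiseLT.trans (h₁ : f ≺ g) (h₂ : g ≺ h) : f ≺ h := fun x => (h₁ x).trans (h₂ x)

theorem PointwiseLE.trans_lt (h₁ : f ≼ g) (h₂ : g ≺ h) : f ≺ h := fun x => (h₁ x).trans_lt (h₂ x)

instance : Trans (PointwiseLT (X := X)) PointwiseLT PointwiseLT := ⟨PointwiseLT.trans⟩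

theorem PointwiseLT.irrefl [Nonempty X] (f : X ≃o X) : ¬ f ≺ f :=
  fun hf => lt_irrefl _ (hf (Classical.arbitrary X))

theorem PointwiseLT.mul_left (h : X ≃o X) (hfg : f ≺ g) : h * f ≺ h * g :=
  fun x => h.strictMono (hfg x)

theorem PointwiseLT.mul_right (hfg : f ≺ g) (h : X ≃o X) : f * h ≺ g * h :=
  fun x => hfg (h x)

theorem PointwiseLT.mul (hfg : f ≺ g) (hfg' : f' ≺ g') : f * f' ≺ g * g' :=
  fun x => (f.strictMono (hfg' x)).trans (hfg (g' x))

theorem PointwiseLT.inv (hfg : f ≺ g) : g⁻¹ ≺ f⁻¹ := fun x =>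
  calc g.symm x = f.symm (f (g.symm x)) := (f.symm_apply_apply _).symm
    _ < f.symm (g (g.symm x)) := f.symm.strictMono (hfg _)
    _ = f.symm x := by rw [g.apply_symm_apply]

theorem PointwiseLE.mul_left (h : X ≃o X) (hfg : f ≼ g) : h * f ≼ h * g :=
  fun x => h.monotone (hfg x)

theorem PointwiseLE.mul_right (hfg : f ≼ g) (h : X ≃o X) : f * h ≼ g * h :=
  fun x => hfg (h x)

theorem PointwiseLE.mul (hfg : f ≼ g) (hfg' : f' ≼ g') : f * f' ≼ g * g' :=
  fun x => (f.monotone (hfg' x)).trans (hfg (g' x))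

theorem mul_pointwiseLT_mul_mul_of_one_pointwiseLT (hm : 1 ≺ h) (f g : X ≃o X) :
    f * g ≺ f * h * g := by
  simpa [mul_assoc] using ((hm.mul_right g).mul_left f)

theorem one_pointwiseLT_pow (hf : 1 ≺ f) {n : ℕ} (hn : n ≠ 0) : 1 ≺ f ^ n := by
  induction n with
  | zero => exact absurd rfl hn
  | succ n ih =>
    rcases eq_or_ne n 0 with rfl | hn'
    · simpa using hf
    · simpa [pow_succ] using (ih hn').mul hf

theorem zpow_pointwiseLT_zpow (hf : 1 ≺ f) {m n : ℤ} (hmn : m < n) : f ^ m ≺ f ^ n := by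
  obtain ⟨k, hk, rfl⟩ : ∃ k : ℕ, k ≠ 0 ∧ n = k + m := ⟨(n - m).toNat, by omega, by omega⟩
  simpa [zpow_add] using (one_pointwiseLT_pow hf hk).mul_right (f ^ m)

theorem zpow_pointwiseLE_zpow (hf : 1 ≺ f) {m n : ℤ} (hmn : m ≤ n) : f ^ m ≼ f ^ n := by
  rcases hmn.eq_or_lt with rfl | hlt
  · exact fun _ => le_rfl
  · exact fun x => (zpow_pointwiseLT_zpow hf hlt x).le

variable {a m t : X ≃o X}

theorem mul_mul_pointwiseLT_of_relation (hm : 1 ≺ m)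
    (hR : m * a ^ 2 * m * (a ^ 3)⁻¹ * (m * a ^ 2 * m) = a * m⁻¹ * a) :
    m * a * m ≺ a * m⁻¹ * a :=
  calc m * a * m = m * a ^ 2 * (a⁻¹ * m) := by group
    _ ≺ m * a ^ 2 * m * (a⁻¹ * m) := mul_pointwiseLT_mul_mul_of_one_pointwiseLT hm _ _
    _ = m * a ^ 2 * m * (a ^ 3)⁻¹ * (a ^ 2 * m) := by group
    _ ≺ m * a ^ 2 * m * (a ^ 3)⁻¹ * m * (a ^ 2 * m) :=
      mul_pointwiseLT_mul_mul_of_one_pointwiseLT hm _ _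
    _ = a * m⁻¹ * a := (by group : _ = _).trans hR

theorem sq_mul_sq_pointwiseLT_of_relation (hm : 1 ≺ m)
    (hR : m * a ^ 2 * m * (a ^ 3)⁻¹ * (m * a ^ 2 * m) = a * m⁻¹ * a) :
    m ^ 2 * a * m ^ 2 ≺ m * a ^ 2 * m :=
  calc m ^ 2 * a * m ^ 2 = m * (m * a * m) * m := by simp only [sq, mul_assoc]
    _ ≺ m * (a * m⁻¹ * a) * m := ((mul_mul_pointwiseLT_of_relation hm hR).mul_left m).mul_right m
    _ ≺ m * (a * m⁻¹ * m * a) * m :=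
      ((mul_pointwiseLT_mul_mul_of_one_pointwiseLT hm _ _).mul_left m).mul_right m
    _ = m * a ^ 2 * m := by simp only [sq, mul_assoc, inv_mul_cancel_left]

theorem pow_three_pointwiseLT_of_pow_pointwiseLT_sq (hinv : m⁻¹ = a ^ 2 * t * a ^ 3 * t * a ^ 2)
    (hle : (m ^ 8)⁻¹ ≼ t) {k : ℤ} (hk : m ^ k ≺ a ^ 2) : a ^ 3 ≺ m ^ (15 - 2 * k) := by
  have hW : a ^ 2 * (m ^ 8)⁻¹ * a ^ 3 * (m ^ 8)⁻¹ * a ^ 2 ≼ m⁻¹ := by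
    rw [hinv]
    exact (((hle.mul_left _).mul_right _).mul hle).mul_right _
  have hub : a ^ 3 ≼ m ^ 8 * (a ^ 2)⁻¹ * m⁻¹ * (a ^ 2)⁻¹ * m ^ 8 :=
    calc a ^ 3 = m ^ 8 * (a ^ 2)⁻¹ * (a ^ 2 * (m ^ 8)⁻¹ * a ^ 3 * (m ^ 8)⁻¹ * a ^ 2)
          * (a ^ 2)⁻¹ * m ^ 8 := by group
      _ ≼ m ^ 8 * (a ^ 2)⁻¹ * m⁻¹ * (a ^ 2)⁻¹ * m ^ 8 :=
        ((hW.mul_left _).mul_right _).mul_right _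
  refine hub.trans_lt ?_
  calc m ^ 8 * (a ^ 2)⁻¹ * m⁻¹ * (a ^ 2)⁻¹ * m ^ 8
      ≺ m ^ 8 * (m ^ k)⁻¹ * m⁻¹ * (m ^ k)⁻¹ * m ^ 8 :=
        (((hk.inv.mul_left _).mul_right _).mul hk.inv).mul_right _
    _ = m ^ (15 - 2 * k) := by group

theorem pow_five_pointwiseLT_sq (hm : 1 ≺ m)
    (hR : m * a ^ 2 * m * (a ^ 3)⁻¹ * (m * a ^ 2 * m) = a * m⁻¹ * a)
    (hsq : m ^ 2 ≺ a) (h7 : a ^ 3 ≺ m ^ 7) : m ^ 5 ≺ a ^ 2 := by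
  have hU := sq_mul_sq_pointwiseLT_of_relation hm hR
  have hV : m ^ 2 * m ^ 2 * m ^ 2 ≺ m ^ 2 * a * m ^ 2 := (hsq.mul_left _).mul_right _
  calc m ^ 5 = m ^ 2 * m ^ 2 * m ^ 2 * (m ^ 7)⁻¹ * (m ^ 2 * m ^ 2 * m ^ 2) := by group
    _ ≺ m ^ 2 * a * m ^ 2 * (m ^ 7)⁻¹ * (m ^ 2 * a * m ^ 2) := (hV.mul_right _).mul hV
    _ ≺ m ^ 2 * a * m ^ 2 * (a ^ 3)⁻¹ * (m ^ 2 * a * m ^ 2) :=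
      (h7.inv.mul_left _).mul_right _
    _ ≺ m * a ^ 2 * m * (a ^ 3)⁻¹ * (m * a ^ 2 * m) := (hU.mul_right _).mul hU
    _ = a * m⁻¹ * a := hR
    _ ≺ a * m⁻¹ * m * a := mul_pointwiseLT_mul_mul_of_one_pointwiseLT hm _ _
    _ = a ^ 2 := by rw [inv_mul_cancel_right, sq]

end Preorder

section LinearOrder

variable [LinearOrder X] {a m t : X ≃o X}

theorem sq_pointwiseLT_of_relation (hm : 1 ≺ m)
    (hR : m * a ^ 2 * m * (a ^ 3)⁻¹ * (m * a ^ 2 * m) = a * m⁻¹ * a) : m ^ 2 ≺ a := by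
  intro x
  by_contra! hx
  have h₁ : m.symm (a x) ≤ m x := by simpa [sq] using m.symm.monotone hx
  have h₂ : a (m x) < m (a (m x)) := hm _
  exact (mul_mul_pointwiseLT_of_relation hm hR x).not_ge ((a.monotone h₁).trans h₂.le)

theorem not_inv_pow_eight_pointwiseLE [Nonempty X] (hm : 1 ≺ m)
    (hR : m * a ^ 2 * m * (a ^ 3)⁻¹ * (m * a ^ 2 * m) = a * m⁻¹ * a)
    (hinv : m⁻¹ = a ^ 2 * t * a ^ 3 * t * a ^ 2) : ¬ (m ^ 8)⁻¹ ≼ t := by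
  intro hle
  have hsq := sq_pointwiseLT_of_relation hm hR
  have h7 : a ^ 3 ≺ m ^ 7 := by
    simpa using pow_three_pointwiseLT_of_pow_pointwiseLT_sq hinv hle (k := 4)
      (by simpa [← pow_mul, ← sq] using hsq.mul hsq)
  have h5 := pow_five_pointwiseLT_sq hm hR hsq h7
  have hup : a ^ 3 ≺ m ^ 5 := by
    simpa using pow_three_pointwiseLT_of_pow_pointwiseLT_sq hinv hle (k := 5) (by simpa using h5)
  have hlow : m ^ 7 ≺ a ^ 3 := by
    have h := hsq.mul h5
    rwa [← pow_add, ← pow_succ'] at h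
  have h57 : m ^ 5 ≺ m ^ 7 := by simpa using zpow_pointwiseLT_zpow hm (by norm_num : (5 : ℤ) < 7)
  exact PointwiseLT.irrefl _ (h57.trans (hlow.trans hup))

end LinearOrder

end OrderIso

/-- Final step of Proposition "real": if `xκ > x` for all `x ∈ ℝ`, then
`xκ^{18q−p} > xκ^{8q}` for all `x`, hence `18q − p > 8q`, i.e. `p/q < 10`. -/
theorem final_step_p_lt_ten_q (α β κ μ : ℝ ≃o ℝ) (p q : ℤ) (hq : 0 < q)
    -- the relation α²βα²β²α⁻¹β² = 1, read as a right action
    (hrel : ∀ x : ℝ, β (β (α.symm (β (β (α (α (β (α (α x))))))))) = x)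
    -- μ = α⁻¹β⁻²
    (hμ : ∀ x : ℝ, μ x = β.symm (β.symm (α.symm x)))
    -- μ = κ^q
    (hμκ : ∀ x : ℝ, μ x = (κ ^ q) x)
    -- κ^{p-18q} = α⁻²βα⁻¹
    (hκ : ∀ x : ℝ, (κ ^ (p - 18 * q)) x = α.symm (β (α.symm (α.symm x))))
    (hκpos : ∀ x : ℝ, x < κ x) :
    (∀ x : ℝ, (κ ^ (8 * q)) x < (κ ^ (18 * q - p)) x) ∧
    8 * q < 18 * q - p ∧ p < 10 * q := by
  have hκ₁ : OrderIso.PointwiseLT 1 κ := hκpos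
  have hμκ' : μ = κ ^ q := DFunLike.ext _ _ hμκ
  have hμ' : μ = (β ^ 2)⁻¹ * α⁻¹ := DFunLike.ext _ _ hμ
  have hκ' : κ ^ (p - 18 * q) = α⁻¹ * β * (α ^ 2)⁻¹ := DFunLike.ext _ _ hκ
  have hμ₁ : OrderIso.PointwiseLT 1 μ := by
    simpa [hμκ'] using OrderIso.zpow_pointwiseLT_zpow hκ₁ hq
  have hp : p < 10 * q := by
    by_contra! hp
    refine OrderIso.not_inv_pow_eight_pointwiseLE hμ₁
      (relation_of_eq_inv_mul_inv (DFunLike.ext _ _ hrel) hμ') (inv_eq_of_eq_inv_mul_inv hμ' hκ') ?_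
    rw [hμκ', ← zpow_natCast, ← zpow_mul, ← zpow_neg]
    exact OrderIso.zpow_pointwiseLE_zpow hκ₁ (by omega)
  exact ⟨OrderIso.zpow_pointwiseLT_zpow hκ₁ (by omega), by omega, hp⟩
end

section
/- Let α, β, κ, μ be order-preserving bijections of a totally ordered set with α²βα²β²α⁻¹β² = id, μ = α⁻¹β⁻², κ^{p−18q} = α⁻²βα⁻¹. If a point x satisfies xκ^{p−18q} = x, x < xα, then successively: xα < xβ, x < xβ, x < xβ², and hence x < xμ⁻¹ (equivalently xμ < x). -/
/-!
Since `x < α x`, also `α⁻¹ α⁻¹ x < x`, and the fixed-point equation `α⁻¹ β α⁻¹ α⁻¹ x = x`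
gives `α x = β (α⁻¹ α⁻¹ x) < β x`. Hence `x < β x < β β x`, and `μ x < x` because
`α⁻¹ x < x < β β x`.
-/

namespace OrderIso

variable {P : Type*} [Preorder P] (e : P ≃o P) {x : P}

theorem lt_apply_apply_of_lt_apply (h : x < e x) : x < e (e x) :=
  h.trans (e.lt_iff_lt.2 h)

theorem apply_apply_lt_of_apply_lt (h : e x < x) : e (e x) < x :=
  (e.lt_iff_lt.2 h).trans h

end OrderIso

theorem lem_ka_computation_general {P : Type*} [LinearOrder P]
    (κ α β μ : P ≃o P) (p q : ℤ)
    -- μ = α⁻¹β⁻²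
    (hμ : ∀ x : P, μ x = β.symm (β.symm (α.symm x)))
    -- κ^{p-18q} = α⁻²βα⁻¹
    (hκ : ∀ x : P, (κ ^ (p - 18 * q)) x = α.symm (β (α.symm (α.symm x))))
    (x : P) (hfix : (κ ^ (p - 18 * q)) x = x) (hxα : x < α x) :
    α x < β x ∧ x < β x ∧ x < β (β x) ∧ μ x < x := by
  have hα : α.symm x < x := α.symm_apply_lt.2 hxα
  have hβα : β (α.symm (α.symm x)) = α x := α.symm_apply_eq.1 ((hκ x).symm.trans hfix)
  have hαβ : α x < β x := hβα ▸ β.lt_iff_lt.2 (α.symm.apply_apply_lt_of_apply_lt hα)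
  have hβ : x < β x := hxα.trans hαβ
  have hβ₂ : x < β (β x) := β.lt_apply_apply_of_lt_apply hβ
  refine ⟨hαβ, hβ, hβ₂, ?_⟩
  rw [hμ, β.symm_apply_lt, β.symm_apply_lt]
  exact hα.trans hβ₂

/-- Computation from Lemma `lem:ka`: order-preserving bijections of a totally
ordered set with the pretzel relations; if `xκ^{p−18q} = x` and `x < xα`,
then successively `xα < xβ`, `x < xβ`, `x < xβ²`, and hence `xμ < x`. -/
theorem lem_ka_computation {P : Type*} [LinearOrder P]
    (κ α β μ : P ≃o P) (p q : ℤ)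
    -- the relation α²βα²β²α⁻¹β² = 1, read as a right action
    (hrel : ∀ x : P, β (β (α.symm (β (β (α (α (β (α (α x))))))))) = x)
    -- μ = α⁻¹β⁻²
    (hμ : ∀ x : P, μ x = β.symm (β.symm (α.symm x)))
    -- κ^{p-18q} = α⁻²βα⁻¹
    (hκ : ∀ x : P, (κ ^ (p - 18 * q)) x = α.symm (β (α.symm (α.symm x))))
    (x : P) (hfix : (κ ^ (p - 18 * q)) x = x) (hxα : x < α x) :
    α x < β x ∧ x < β x ∧ x < β (β x) ∧ μ x < x :=
  lem_ka_computation_general κ α β μ p q hμ hκ x hfix hxα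
end
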